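/- Let q > 0, 0 < a₂ < a₁, 0 < b₂ < b₁, and c > a₁ + b₁. Then the function g(z) = F(a₁,b₁;c;z) - q F(a₂,b₂;c;z) has at most one zero in [0,1]; moreover, if z₀ ∈ [0,1] is a zero, then g < 0 on [0,z₀) and g > 0 on (z₀,1]. -/

import Mathlib

open Real Set MeasureTheory

/-- Pochhammer symbol (rising factorial) for a real argument. -/
noncomputable def poch (x : ℝ) (n : ℕ) : ℝ := ∏ i ∈ Finset.range n, (x + i)

/-- Gauss hypergeometric series. -/
noncomputable def hyperF (a b c z : ℝ) : ℝ :=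
  ∑' n : ℕ, poch a n * poch b n / (poch c n * (n.factorial : ℝ)) * z ^ n

noncomputable def hT (a b c : ℝ) (n : ℕ) : ℝ :=
  poch a n * poch b n / (poch c n * (n.factorial : ℝ))

lemma poch_succ (x : ℝ) (n : ℕ) : poch x (n+1) = poch x n * (x + n) :=
  Finset.prod_range_succ _ _

lemma poch_pos {x : ℝ} (hx : 0 < x) (n : ℕ) : 0 < poch x n :=
  Finset.prod_pos (fun i _ => by positivity)

lemma hT_pos {a b c : ℝ} (ha : 0 < a) (hb : 0 < b) (hc : 0 < c) (n : ℕ) :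
    0 < hT a b c n := by
  have h1 := poch_pos ha n
  have h2 := poch_pos hb n
  have h3 := poch_pos hc n
  have h4 : (0:ℝ) < n.factorial := by exact_mod_cast n.factorial_pos
  exact div_pos (mul_pos h1 h2) (mul_pos h3 h4)

lemma hT_succ {a b c : ℝ} (ha : 0 < a) (hb : 0 < b) (hc : 0 < c) (n : ℕ) :
    hT a b c (n+1) = hT a b c n * ((a+n)*(b+n)/((c+n)*(n+1))) := by
  have h3 := (poch_pos hc n).ne'
  have h4 : ((n.factorial : ℝ)) ≠ 0 := by positivity
  have h5 : (c + n) ≠ 0 := by positivity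
  have h6 : ((n:ℝ) + 1) ≠ 0 := by positivity
  unfold hT
  rw [poch_succ, poch_succ, poch_succ, Nat.factorial_succ]
  push_cast
  field_simp

lemma hT_summable {a b c : ℝ} (ha : 0 < a) (hb : 0 < b) (hcb : a + b < c) :
    Summable (hT a b c) := by
  have hc : 0 < c := lt_trans (by positivity) hcb
  set δ := c - a - b with hδdef
  have hδ : 0 < δ := by simp only [hδdef]; linarith
  set T := hT a b c with hTdef
  have hTp : ∀ n, 0 < T n := hT_pos ha hb hc
  set w : ℕ → ℝ := fun n => n * T n with hwdef
  have hwnn : ∀ n, 0 ≤ w n := fun n => by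
    have := (hTp n).le; positivity
  have key : ∀ n : ℕ, w n - w (n+1) = T n * ((δ*n - a*b)/(c+n)) := by
    intro n
    have h5 : (c + (n:ℝ)) ≠ 0 := by positivity
    have h6 : ((n:ℝ) + 1) ≠ 0 := by positivity
    simp only [hwdef, hTdef]
    rw [hT_succ ha hb hc]
    push_cast
    field_simp
    ring
  set N : ℕ := ⌈2*a*b/δ + c⌉₊ with hNdef
  have hNge : 2*a*b/δ + c ≤ (N:ℝ) := Nat.le_ceil _
  have key2 : ∀ k : ℕ, (δ/2) * T (k + N) ≤ w (k + N) - w (k + N + 1) := by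
    intro k
    rw [key]
    set n := k + N with hn
    have hnN : (N:ℝ) ≤ (n:ℝ) := by exact_mod_cast Nat.le_add_left N k
    have hnum : (δ/2) * (c + n) ≤ δ*n - a*b := by
      have h1 : 2*a*b/δ + c ≤ (n:ℝ) := le_trans hNge hnN
      have h2 : 2*a*b/δ * δ = 2*a*b := by field_simp
      nlinarith [hδ, h1]
    have hcn : (0:ℝ) < c + n := by positivity
    have : δ/2 ≤ (δ*n - a*b)/(c+n) := (le_div_iff₀ hcn).mpr (by linarith [hnum])
    have hT' := (hTp n).le
    calc (δ/2) * T n ≤ (δ*n - a*b)/(c+n) * T n := by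
          exact mul_le_mul_of_nonneg_right this hT'
      _ = T n * ((δ*n - a*b)/(c+n)) := by ring
  have hsum : ∀ m : ℕ, ∑ k ∈ Finset.range m, T (k + N) ≤ 2/δ * w N := by
    intro m
    have tele : ∑ k ∈ Finset.range m, (w (k + N) - w (k + N + 1)) = w N - w (m + N) := by
      have := Finset.sum_range_sub' (fun k => w (k + N)) m
      simpa [Nat.add_right_comm] using this
    have h1 : ∑ k ∈ Finset.range m, (δ/2) * T (k + N) ≤ w N - w (m + N) := by
      rw [← tele]
      exact Finset.sum_le_sum (fun k _ => key2 k)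
    have h2 : (δ/2) * ∑ k ∈ Finset.range m, T (k + N) ≤ w N := by
      rw [Finset.mul_sum]
      exact le_trans h1 (by linarith [hwnn (m + N)])
    have h3 : ∑ k ∈ Finset.range m, T (k + N) = 2/δ * ((δ/2) * ∑ k ∈ Finset.range m, T (k + N)) := by
      field_simp
    rw [h3]
    have h4 : 0 ≤ 2/δ := by positivity
    exact mul_le_mul_of_nonneg_left h2 h4
  have hs : Summable (fun k => T (k + N)) :=
    summable_of_sum_range_le (fun k => (hTp (k + N)).le) hsum
  exact (summable_nat_add_iff N).mp hs

lemma poch_zero (x : ℝ) : poch x 0 = 1 := by simp [poch]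

lemma hT_zero (a b c : ℝ) : hT a b c 0 = 1 := by simp [hT, poch_zero]

set_option maxHeartbeats 2000000 in
theorem hyperF_diff_one_zero (q a₁ a₂ b₁ b₂ c : ℝ) (hq : 0 < q) (ha₂ : 0 < a₂)
    (ha : a₂ < a₁) (hb₂ : 0 < b₂) (hb : b₂ < b₁) (hc : a₁ + b₁ < c)
    (g : ℝ → ℝ) (hg : ∀ z, g z = hyperF a₁ b₁ c z - q * hyperF a₂ b₂ c z) :
    (∀ z₀ ∈ Set.Icc (0 : ℝ) 1, ∀ z₁ ∈ Set.Icc (0 : ℝ) 1, g z₀ = 0 → g z₁ = 0 → z₀ = z₁) ∧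
    (∀ z₀ ∈ Set.Icc (0 : ℝ) 1, g z₀ = 0 →
      (∀ z ∈ Set.Ico (0 : ℝ) z₀, g z < 0) ∧ (∀ z ∈ Set.Ioc z₀ 1, 0 < g z)) := by
  have ha₁ : 0 < a₁ := ha₂.trans ha
  have hb₁ : 0 < b₁ := hb₂.trans hb
  have hc0 : 0 < c := by linarith
  set A := hT a₁ b₁ c with hAdef
  set B := hT a₂ b₂ c with hBdef
  have hApos : ∀ n, 0 < A n := hT_pos ha₁ hb₁ hc0
  have hBpos : ∀ n, 0 < B n := hT_pos ha₂ hb₂ hc0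
  have hAsum : Summable A := hT_summable ha₁ hb₁ hc
  have hBsum : Summable B := hT_summable ha₂ hb₂ (by linarith)
  set r : ℕ → ℝ := fun n => poch a₁ n * poch b₁ n / (poch a₂ n * poch b₂ n) with hrdef
  have hrpos : ∀ n, 0 < r n := fun n =>
    div_pos (mul_pos (poch_pos ha₁ n) (poch_pos hb₁ n))
      (mul_pos (poch_pos ha₂ n) (poch_pos hb₂ n))
  have hAr : ∀ n, A n = r n * B n := by
    intro n
    have h1 := (poch_pos ha₂ n).ne'
    have h2 := (poch_pos hb₂ n).ne'
    have h3 := (poch_pos hc0 n).ne'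
    have h4 : ((n.factorial : ℝ)) ≠ 0 := by positivity
    simp only [hAdef, hBdef, hrdef, hT]
    field_simp
  have hr0 : r 0 = 1 := by simp [hrdef, poch_zero]
  have hrmono : StrictMono r := by
    apply strictMono_nat_of_lt_succ
    intro n
    have hfac : (a₂ + n) * (b₂ + n) < (a₁ + n) * (b₁ + n) := by nlinarith
    have hd₂ : (0:ℝ) < (a₂ + n) * (b₂ + n) := by positivity
    have hd₁ : (0:ℝ) < (a₁ + n) * (b₁ + n) := by positivity
    have he : r (n+1) = r n * ((a₁ + n) * (b₁ + n) / ((a₂ + n) * (b₂ + n))) := by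
      simp only [hrdef]
      rw [poch_succ, poch_succ, poch_succ, poch_succ]
      field_simp
    rw [he]
    have h1 : (1:ℝ) < (a₁ + n) * (b₁ + n) / ((a₂ + n) * (b₂ + n)) :=
      (one_lt_div hd₂).mpr hfac
    exact lt_mul_right (hrpos n) h1
  set cc : ℕ → ℝ := fun n => A n - q * B n with hccdef
  have hccsign : ∀ n, cc n = B n * (r n - q) := by
    intro n; simp only [hccdef]; rw [hAr]; ring
  have hcc0 : cc 0 = 1 - q := by
    simp only [hccdef, hAdef, hBdef, hT_zero]; ring
  have hSA : ∀ z ∈ Set.Icc (0:ℝ) 1, Summable (fun n => A n * z ^ n) := by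
    intro z hz
    apply hAsum.of_nonneg_of_le (fun n => by
      have := (hApos n).le; have := hz.1; positivity)
    intro n
    calc A n * z ^ n ≤ A n * 1 := by
          have h1 : z ^ n ≤ 1 := pow_le_one₀ hz.1 hz.2
          exact mul_le_mul_of_nonneg_left h1 (hApos n).le
      _ = A n := mul_one _
  have hSB : ∀ z ∈ Set.Icc (0:ℝ) 1, Summable (fun n => B n * z ^ n) := by
    intro z hz
    apply hBsum.of_nonneg_of_le (fun n => by
      have := (hBpos n).le; have := hz.1; positivity)
    intro n
    calc B n * z ^ n ≤ B n * 1 := by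
          have h1 : z ^ n ≤ 1 := pow_le_one₀ hz.1 hz.2
          exact mul_le_mul_of_nonneg_left h1 (hBpos n).le
      _ = B n := mul_one _
  have hSc : ∀ z ∈ Set.Icc (0:ℝ) 1, Summable (fun n => cc n * z ^ n) := by
    intro z hz
    have h1 := (hSA z hz).sub ((hSB z hz).mul_left q)
    convert h1 using 2 with n
    · rfl
    simp only [hccdef]; ring
  have hgz : ∀ z ∈ Set.Icc (0:ℝ) 1, g z = ∑' n, cc n * z ^ n := by
    intro z hz
    rw [hg]
    have e1 : hyperF a₁ b₁ c z = ∑' n, A n * z ^ n := rfl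
    have e2 : hyperF a₂ b₂ c z = ∑' n, B n * z ^ n := rfl
    rw [e1, e2, ← tsum_mul_left, ← Summable.tsum_sub (hSA z hz) ((hSB z hz).mul_left q)]
    exact tsum_congr fun n => by simp only [hccdef]; ring
  -- main part
  have main : ∀ z₀ ∈ Set.Icc (0:ℝ) 1, g z₀ = 0 →
      (∀ z ∈ Set.Ico (0:ℝ) z₀, g z < 0) ∧ (∀ z ∈ Set.Ioc z₀ 1, 0 < g z) := by
    intro z₀ hz₀ h0
    obtain ⟨hz₀0, hz₀1⟩ := hz₀
    have hsum0 : ∑' n, cc n * z₀ ^ n = 0 := by rw [← hgz z₀ ⟨hz₀0, hz₀1⟩]; exact h0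
    have hE : ∃ n, q < r n := by
      by_contra h
      push_neg at h
      have hnonpos : ∀ n, cc n * z₀ ^ n ≤ 0 := by
        intro n
        have h1 : cc n ≤ 0 := by
          rw [hccsign]
          exact mul_nonpos_iff.mpr (Or.inl ⟨(hBpos n).le, by linarith [h n]⟩)
        exact mul_nonpos_iff.mpr (Or.inr ⟨h1, by positivity⟩)
      have hcc0' : cc 0 = 0 := by
        have hneg : Summable (fun n => -(cc n * z₀ ^ n)) := (hSc z₀ ⟨hz₀0, hz₀1⟩).neg
        have h2 : -(cc 0 * z₀ ^ 0) ≤ ∑' n, -(cc n * z₀ ^ n) :=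
          Summable.le_tsum hneg 0 (fun j _ => by linarith [hnonpos j])
        rw [tsum_neg, hsum0] at h2
        have h3 := hnonpos 0
        simp only [pow_zero, mul_one] at h2 h3
        linarith
      have hq1 : r 0 = q := by
        have := hccsign 0
        rw [hcc0'] at this
        rcases mul_eq_zero.mp this.symm with h' | h'
        · exact absurd h' (hBpos 0).ne'
        · linarith
      have hm := hrmono (show (0:ℕ) < 1 by norm_num)
      have h1' := h 1
      rw [← hq1] at h1'
      linarith
    set N := Nat.find hE with hNdef
    have hN : q < r N := Nat.find_spec hE
    have hNmin : ∀ m, m < N → r m ≤ q := fun m hm => not_lt.mp (Nat.find_min hE hm)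
    have hccneg : ∀ n, n < N → cc n ≤ 0 := by
      intro n hn
      rw [hccsign]
      exact mul_nonpos_iff.mpr (Or.inl ⟨(hBpos n).le, by linarith [hNmin n hn]⟩)
    have hccpos : ∀ n, N ≤ n → 0 < cc n := by
      intro n hn
      rw [hccsign]
      have : q < r n := lt_of_lt_of_le hN (hrmono.monotone hn)
      exact mul_pos (hBpos n) (by linarith)
    -- the case z₀ = 0 implies cc 0 = 0 etc., handled via:
    have hposN1 : ∀ n, N + 1 ≤ n → 0 < cc n := fun n hn => hccpos n (le_trans (Nat.le_succ N) hn)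
    constructor
    · -- negative side
      rintro z ⟨hz0, hzlt⟩
      have hz₀pos : 0 < z₀ := lt_of_le_of_lt hz0 hzlt
      rcases eq_or_lt_of_le hz0 with hzeq | hzpos
      · -- z = 0 : show g 0 = cc 0 < 0
        have hcc0neg : cc 0 < 0 := by
          by_contra hcon
          push_neg at hcon
          rcases eq_or_lt_of_le hcon with heq | hlt
          · -- cc 0 = 0 : then r 0 = q, cc n > 0 for n ≥ 1, sum positive, contra
            have hq1 : r 0 = q := by
              have := hccsign 0
              rw [← heq] at this
              rcases mul_eq_zero.mp this.symm with h' | h'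
              · exact absurd h' (hBpos 0).ne'
              · linarith
            have hpos1 : ∀ n, 1 ≤ n → 0 < cc n := by
              intro n hn
              rw [hccsign]
              have : r 0 < r n := hrmono (by omega)
              exact mul_pos (hBpos n) (by rw [hq1] at this; linarith)
            have : 0 < ∑' n, cc n * z₀ ^ n := by
              apply Summable.tsum_pos (hSc z₀ ⟨hz₀0, hz₀1⟩) _ 1
              · have := hpos1 1 le_rfl
                have := pow_pos hz₀pos 1
                positivity
              · intro n
                rcases Nat.eq_zero_or_pos n with h' | h'
                · subst h'; rw [← heq]; simp
                · have := hpos1 n h'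
                  have := pow_pos hz₀pos n
                  positivity
            linarith [hsum0]
          · -- cc 0 > 0 : then q < r 0, all cc n > 0, sum positive, contra
            have hq1 : q < r 0 := by
              have h1 := hccsign 0
              nlinarith [hBpos 0]
            have hpos1 : ∀ n, 0 < cc n := by
              intro n
              rw [hccsign]
              have : r 0 ≤ r n := hrmono.monotone (Nat.zero_le n)
              exact mul_pos (hBpos n) (by linarith)
            have : 0 < ∑' n, cc n * z₀ ^ n := by
              apply Summable.tsum_pos (hSc z₀ ⟨hz₀0, hz₀1⟩) _ 0
              · have := hpos1 0; simp; linarith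
              · intro n
                have := hpos1 n
                have := pow_pos hz₀pos n
                positivity
            linarith [hsum0]
        have : g z = cc 0 := by
          rw [hgz z ⟨hz0, le_trans (le_of_lt hzlt) hz₀1⟩, ← hzeq]
          rw [tsum_eq_single 0 (fun n hn => by simp [zero_pow hn])]
          simp
        rw [this]; exact hcc0neg
      · -- 0 < z < z₀
        set t := z / z₀ with htdef
        have ht0 : 0 < t := div_pos hzpos hz₀pos
        have ht1 : t < 1 := (div_lt_one hz₀pos).mpr hzlt
        have hzt : z = z₀ * t := by rw [htdef]; field_simp
        have hzIcc : z ∈ Set.Icc (0:ℝ) 1 := ⟨hz0, le_trans hzlt.le hz₀1⟩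
        have hS1 : Summable (fun n => cc n * z₀ ^ n * t ^ n) := by
          have h1 := hSc z hzIcc
          convert h1 using 2 with n
          rw [hzt, mul_pow]; ring
        have hS2 : Summable (fun n => cc n * z₀ ^ n * t ^ N) :=
          (hSc z₀ ⟨hz₀0, hz₀1⟩).mul_right _
        have hgzval : g z = ∑' n, (cc n * z₀ ^ n * t ^ n - cc n * z₀ ^ n * t ^ N) := by
          rw [Summable.tsum_sub hS1 hS2]
          have e0 : ∑' n, cc n * z₀ ^ n * t ^ N = 0 := by
            rw [tsum_mul_right, hsum0, zero_mul]
          rw [e0, sub_zero, hgz z hzIcc]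
          exact tsum_congr fun n => by rw [hzt, mul_pow]; ring
        have hterm : ∀ n, cc n * z₀ ^ n * t ^ n - cc n * z₀ ^ n * t ^ N ≤ 0 := by
          intro n
          have e : cc n * z₀ ^ n * t ^ n - cc n * z₀ ^ n * t ^ N
              = cc n * z₀ ^ n * (t ^ n - t ^ N) := by ring
          rw [e]
          rcases lt_or_ge n N with h | h
          · have h1 : cc n * z₀ ^ n ≤ 0 :=
              mul_nonpos_iff.mpr (Or.inr ⟨hccneg n h, by positivity⟩)
            have h2 : t ^ N ≤ t ^ n := pow_le_pow_of_le_one ht0.le ht1.le h.le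
            exact mul_nonpos_iff.mpr (Or.inr ⟨h1, by linarith⟩)
          · have h1 : 0 ≤ cc n * z₀ ^ n :=
              (mul_pos (hccpos n h) (pow_pos hz₀pos n)).le
            have h2 : t ^ n ≤ t ^ N := pow_le_pow_of_le_one ht0.le ht1.le h
            exact mul_nonpos_iff.mpr (Or.inl ⟨h1, by linarith⟩)
        have hstrict : cc (N+1) * z₀ ^ (N+1) * t ^ (N+1) - cc (N+1) * z₀ ^ (N+1) * t ^ N < 0 := by
          have h1 : 0 < cc (N+1) * z₀ ^ (N+1) :=
            mul_pos (hposN1 (N+1) le_rfl) (pow_pos hz₀pos _)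
          have h2 : t ^ (N+1) < t ^ N := pow_lt_pow_right_of_lt_one₀ ht0 ht1 (Nat.lt_succ_self N)
          have h3 : 0 < cc (N+1) * z₀ ^ (N+1) * (t ^ N - t ^ (N+1)) :=
            mul_pos h1 (sub_pos.mpr h2)
          nlinarith [h3]
        rw [hgzval]
        calc ∑' n, (cc n * z₀ ^ n * t ^ n - cc n * z₀ ^ n * t ^ N)
            < ∑' _n : ℕ, (0:ℝ) :=
              Summable.tsum_lt_tsum hterm hstrict (hS1.sub hS2) summable_zero
          _ = 0 := tsum_zero
    · -- positive side
      rintro z ⟨hzgt, hz1⟩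
      have hzpos : 0 < z := lt_of_le_of_lt hz₀0 hzgt
      have hzIcc : z ∈ Set.Icc (0:ℝ) 1 := ⟨hzpos.le, hz1⟩
      set t := z₀ / z with htdef
      have ht0 : 0 ≤ t := div_nonneg hz₀0 hzpos.le
      have ht1 : t < 1 := (div_lt_one hzpos).mpr hzgt
      have hz₀t : z₀ = z * t := by rw [htdef]; field_simp
      rcases eq_or_lt_of_le ht0 with hteq | htpos
      · -- t = 0, i.e. z₀ = 0
        have hz₀eq : z₀ = 0 := by rw [hz₀t, ← hteq, mul_zero]
        have hcc0' : cc 0 = 0 := by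
          rw [← hsum0, hz₀eq]
          rw [tsum_eq_single 0 (fun n hn => by simp [zero_pow hn])]
          simp
        have hq1 : r 0 = q := by
          have := hccsign 0
          rw [hcc0'] at this
          rcases mul_eq_zero.mp this.symm with h' | h'
          · exact absurd h' (hBpos 0).ne'
          · linarith
        have hpos1 : ∀ n, 1 ≤ n → 0 < cc n := by
          intro n hn
          rw [hccsign]
          have : r 0 < r n := hrmono (by omega)
          exact mul_pos (hBpos n) (by rw [hq1] at this; linarith)
        rw [hgz z hzIcc]
        apply Summable.tsum_pos (hSc z hzIcc) _ 1
        · have := hpos1 1 le_rfl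
          have := pow_pos hzpos 1
          positivity
        · intro n
          rcases Nat.eq_zero_or_pos n with h' | h'
          · subst h'; rw [hcc0']; simp
          · have := hpos1 n h'
            have := pow_pos hzpos n
            positivity
      · -- 0 < t
        have hS1 : Summable (fun n => cc n * z ^ n * t ^ N) :=
          (hSc z hzIcc).mul_right _
        have hS2 : Summable (fun n => cc n * z ^ n * t ^ n) := by
          have h1 := hSc z₀ ⟨hz₀0, hz₀1⟩
          convert h1 using 2 with n
          rw [hz₀t, mul_pow]; ring
        have hkey : g z * t ^ N = ∑' n, (cc n * z ^ n * t ^ N - cc n * z ^ n * t ^ n) := by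
          rw [Summable.tsum_sub hS1 hS2]
          have e0 : ∑' n, cc n * z ^ n * t ^ n = 0 := by
            rw [← hsum0]
            exact tsum_congr fun n => by rw [hz₀t, mul_pow]; ring
          rw [e0, sub_zero, hgz z hzIcc, ← tsum_mul_right]
        have hterm : ∀ n, 0 ≤ cc n * z ^ n * t ^ N - cc n * z ^ n * t ^ n := by
          intro n
          have e : cc n * z ^ n * t ^ N - cc n * z ^ n * t ^ n
              = cc n * z ^ n * (t ^ N - t ^ n) := by ring
          rw [e]
          rcases lt_or_ge n N with h | h
          · have h1 : cc n * z ^ n ≤ 0 :=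
              mul_nonpos_iff.mpr (Or.inr ⟨hccneg n h, by positivity⟩)
            have h2 : t ^ N ≤ t ^ n := pow_le_pow_of_le_one ht0 ht1.le h.le
            exact mul_nonneg_iff.mpr (Or.inr ⟨h1, by linarith⟩)
          · have h1 : 0 ≤ cc n * z ^ n :=
              (mul_pos (hccpos n h) (pow_pos hzpos n)).le
            have h2 : t ^ n ≤ t ^ N := pow_le_pow_of_le_one ht0 ht1.le h
            exact mul_nonneg_iff.mpr (Or.inl ⟨h1, by linarith⟩)
        have hstrict : 0 < cc (N+1) * z ^ (N+1) * t ^ N - cc (N+1) * z ^ (N+1) * t ^ (N+1) := by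
          have h1 : 0 < cc (N+1) * z ^ (N+1) :=
            mul_pos (hposN1 (N+1) le_rfl) (pow_pos hzpos _)
          have h2 : t ^ (N+1) < t ^ N := pow_lt_pow_right_of_lt_one₀ htpos ht1 (Nat.lt_succ_self N)
          have h3 : 0 < cc (N+1) * z ^ (N+1) * (t ^ N - t ^ (N+1)) :=
            mul_pos h1 (sub_pos.mpr h2)
          nlinarith [h3]
        have hgt : 0 < g z * t ^ N := by
          rw [hkey]
          exact Summable.tsum_pos (hS1.sub hS2) hterm (N+1) hstrict
        have htN : 0 < t ^ N := pow_pos htpos N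
        by_contra hcon
        push_neg at hcon
        have : g z * t ^ N ≤ 0 := mul_nonpos_iff.mpr (Or.inr ⟨hcon, htN.le⟩)
        linarith
  refine ⟨?_, main⟩
  intro z₀ hz₀ z₁ hz₁ h₀ h₁
  by_contra hne
  rcases lt_or_gt_of_ne hne with hlt | hlt
  · have := (main z₀ hz₀ h₀).2 z₁ ⟨hlt, hz₁.2⟩
    linarith
  · have := (main z₁ hz₁ h₁).2 z₀ ⟨hlt, hz₀.2⟩
    linarith
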